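/- α-sets form a partition: Let x, y ∈ X, let σ, δ ∈ S^G_{<∞} with rng σ = rng δ = c, and let α ≥ 1 be a countable ordinal. Then: (a) if y ∈ B_α(x,σ) then B_α(y, id_c) = B_α(x,σ), where id_c ∈ S^G_{<∞} is the identity map on c; (b) either B_α(x,σ) = B_α(y,δ) or B_α(x,σ) ∩ B_α(y,δ) = ∅. -/

import Mathlib

open Set Pointwise

noncomputable section

/-- `S_∞`, the group of all permutations of `ℕ`. -/
abbrev Sinf : Type := Equiv.Perm ℕ

/-- The topology of pointwise convergence on `S_∞`. -/
instance SinfTopology : TopologicalSpace Sinf :=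
  TopologicalSpace.induced (fun g : Sinf => (g : ℕ → ℕ)) Pi.topologicalSpace

/-- The graph of the restriction of a permutation `g` to a finite set `d`. -/
def restr (g : Sinf) (d : Finset ℕ) : Set (ℕ × ℕ) := {p | p.1 ∈ d ∧ g p.1 = p.2}

/-- The domain of a partial map coded by its graph. -/
def pdom (σ : Set (ℕ × ℕ)) : Set ℕ := Prod.fst '' σ

/-- The range of a partial map coded by its graph. -/
def prng (σ : Set (ℕ × ℕ)) : Set ℕ := Prod.snd '' σ

/-- `S^G_{<∞}`: graphs of restrictions of elements of `G` to finite subsets of `ℕ`. -/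
def SGfin (G : Subgroup Sinf) : Set (Set (ℕ × ℕ)) :=
  {σ | ∃ g ∈ G, ∃ d : Finset ℕ, σ = restr g d}

/-- `V^G_σ`: the elements of `G` extending the partial bijection `σ`. -/
def Vb (G : Subgroup Sinf) (σ : Set (ℕ × ℕ)) : Set G :=
  {g : G | ∀ p ∈ σ, (g : Sinf) p.1 = p.2}

/-- `V^G_c`: the pointwise stabilizer of `c ⊆ ℕ` in `G`. -/
def Vc (G : Subgroup Sinf) (c : Set ℕ) : Set G :=
  {g : G | ∀ k ∈ c, (g : Sinf) k = k}

/-- The identity partial bijection on `c`. -/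
def idb (c : Set ℕ) : Set (ℕ × ℕ) := {p | p.1 ∈ c ∧ p.2 = p.1}

/-- The composition `σ ∘ f`, restricted to `f⁻¹[dom σ]`. -/
def compR (σ : Set (ℕ × ℕ)) (f : Sinf) : Set (ℕ × ℕ) := {p | (f p.1, p.2) ∈ σ}

/-- The composition `f ∘ σ`. -/
def compL (f : Sinf) (σ : Set (ℕ × ℕ)) : Set (ℕ × ℕ) := {p | (p.1, f⁻¹ p.2) ∈ σ}

/-- The Borel classes `Σ⁰_α(X)`: `Σ⁰_1(X)` consists of the open sets, and for `α > 1`,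
`Σ⁰_α(X)` consists of countable unions of sets whose complements lie in
`⋃_{1 ≤ β < α} Σ⁰_β(X)` (i.e. of sets from `⋃_{1 ≤ β < α} Π⁰_β(X)`). -/
def SigmaB (X : Type*) [TopologicalSpace X] (α : Ordinal.{0}) : Set (Set X) :=
  if α ≤ 1 then {s | IsOpen s}
  else {s | ∃ f : ℕ → Set X,
      (∀ n, ∃ β : {γ : Ordinal.{0} // γ < α}, 1 ≤ β.1 ∧ (f n)ᶜ ∈ SigmaB X β.1) ∧
      s = ⋃ n, f n}
termination_by α
decreasing_by exact β.2

/-- The Borel classes `Π⁰_α(X)`: complements of sets in `Σ⁰_α(X)`. -/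
def PiB (X : Type*) [TopologicalSpace X] (α : Ordinal.{0}) : Set (Set X) :=
  {s | sᶜ ∈ SigmaB X α}

section Action

variable (G : Subgroup Sinf) {X : Type*} [TopologicalSpace X] [MulAction G X]

/-- The image `S • x` of a point under a set of group elements. -/
def setOrb (S : Set G) (x : X) : Set X := (fun g : G => g • x) '' S

/-- The image `S • B` of a set under a set of group elements. -/
def setSmul (S : Set G) (B : Set X) : Set X := ⋃ g ∈ S, g • B

/-- The `1`-sets `B₁(x, σ)`. -/
def BsetOne (A : ℕ → Set X) (σ : Set (ℕ × ℕ)) (x : X) : Set X :=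
  (⋂ l, ⋂ (_ : (setOrb G (Vb G σ) x ∩ A l).Nonempty), setSmul G (Vc G (prng σ)) (A l)) ∩
    (⋂ l, ⋂ (_ : setOrb G (Vb G σ) x ∩ A l = ∅), (setSmul G (Vc G (prng σ)) (A l))ᶜ)

/-- The successor step of the recursion defining the `α`-sets. -/
def BsetSucc (prev : Set (ℕ × ℕ) → X → Set X) (σ : Set (ℕ × ℕ)) (x : X) : Set X :=
  (⋂ b : Finset ℕ, ⋂ (_ : pdom σ ⊆ ↑b),
      ⋃ σ' ∈ SGfin G, ⋃ (_ : σ ⊆ σ') (_ : pdom σ' = ↑b), prev σ' x) ∩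
    (⋂ a : Finset ℕ, ⋂ (_ : prng σ ⊆ ↑a),
      ⋃ σ' ∈ SGfin G, ⋃ (_ : σ ⊆ σ') (_ : prng σ' = ↑a), prev σ' x)

/-- The `α`-sets `B_α(x, σ)`, for `α ≥ 1` (the value at `α = 0` is junk). -/
def Bset (A : ℕ → Set X) (α : Ordinal.{0}) : Set (ℕ × ℕ) → X → Set X :=
  @Ordinal.limitRecOn (fun _ => Set (ℕ × ℕ) → X → Set X) α
    (fun _ _ => univ)
    (fun o ih => if o = 0 then BsetOne G A else BsetSucc G ih)
    (fun o _ ih σ x => ⋂ β : Ordinal.{0}, ⋂ (hβ : β < o), ⋂ (_ : 1 ≤ β), ih β hβ σ x)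

/-- The family `𝓑^x_{<α}` consisting of the basic open sets together with all
`β`-sets of `x` for `1 ≤ β < α`. -/
def BltFam (A : ℕ → Set X) (x : X) (α : Ordinal.{0}) : Set (Set X) :=
  {B | (∃ l, B = A l) ∨
    ∃ β : Ordinal.{0}, 1 ≤ β ∧ β < α ∧ ∃ σ ∈ SGfin G, B = Bset G A β σ x}

/-- `γ^G_*(x)`: the least countable ordinal `γ` such that for all `σ, δ ∈ S^G_{<∞}`
with equal ranges, if `B_α(x,σ) ≠ B_α(x,δ)` for some countable ordinal `α ≥ 1`,
then already `B_γ(x,σ) ≠ B_γ(x,δ)`. -/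
def gammaStar (A : ℕ → Set X) (x : X) : Ordinal :=
  sInf {γ : Ordinal.{0} | γ.card ≤ Cardinal.aleph0 ∧
    ∀ σ ∈ SGfin G, ∀ δ ∈ SGfin G, prng σ = prng δ →
      (∃ α : Ordinal.{0}, 1 ≤ α ∧ α.card ≤ Cardinal.aleph0 ∧
        Bset G A α σ x ≠ Bset G A α δ x) →
      Bset G A γ σ x ≠ Bset G A γ δ x}

end Action

/-- The topology on a subset `S ⊆ X` generated by the traces on `S` of the members
of the family `F`. -/
def traceTop {X : Type*} (S : Set X) (F : Set (Set X)) : TopologicalSpace S :=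
  TopologicalSpace.generateFrom {u : Set S | ∃ B ∈ F, u = Subtype.val ⁻¹' B}

/-- The space of closed subsets of `Y`. -/
def EffrosSpace (Y : Type*) [TopologicalSpace Y] := {K : Set Y // IsClosed K}

/-- The Effros Borel structure on the space of closed subsets of `Y`. -/
def effrosSigma (Y : Type*) [TopologicalSpace Y] : MeasurableSpace (EffrosSpace Y) :=
  MeasurableSpace.generateFrom
    {S | ∃ U : Set Y, IsOpen U ∧ S = {K : EffrosSpace Y | (K.1 ∩ U).Nonempty}}

/-!
Since the `A l` form a basis, `y ∈ B₁(x, σ)` says exactly that `V_σ · x` and `V_{rng σ} · y`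
have the same closure. The sets `V_σ` multiply like the partial bijections
(`V_τ V_σ = V_{τ ∘ σ}` when `dom τ = rng σ`, and `V_τ V_{dom τ} = V_τ`), and `S · cl(T · x)` has
the same closure as `S T · x`; hence the relation `y ∈ B₁(x, σ)` is symmetric
(`x ∈ B₁(y, σ⁻¹)`) and transitive along composition. Both properties pass through the successor
step, by extending partial bijections one after the other, and through limits. Part (a) then
follows from `σ ∘ σ⁻¹ = id_{rng σ}`, and part (b) from (a) at a common point.
-/

def pinv (σ : Set (ℕ × ℕ)) : Set (ℕ × ℕ) := {p | (p.2, p.1) ∈ σ}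

def pcomp (τ σ : Set (ℕ × ℕ)) : Set (ℕ × ℕ) := {p | ∃ j, (p.1, j) ∈ σ ∧ (j, p.2) ∈ τ}

section PartialMaps

variable {σ σ' τ τ' : Set (ℕ × ℕ)}

@[simp]
lemma mem_pdom {k : ℕ} : k ∈ pdom σ ↔ ∃ m, (k, m) ∈ σ := by
  simp [pdom]

@[simp]
lemma mem_prng {m : ℕ} : m ∈ prng σ ↔ ∃ k, (k, m) ∈ σ := by
  simp [prng]

@[simp]
lemma pinv_pinv : pinv (pinv σ) = σ := rfl

@[simp]
lemma pdom_pinv : pdom (pinv σ) = prng σ := by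
  ext; simp [pinv]

@[simp]
lemma prng_pinv : prng (pinv σ) = pdom σ := by
  ext; simp [pinv]

lemma pdom_idb (c : Set ℕ) : pdom (idb c) = c := by
  ext; simp [idb]

lemma prng_idb (c : Set ℕ) : prng (idb c) = c := by
  ext; simp [idb]

lemma pinv_mono (h : σ ⊆ σ') : pinv σ ⊆ pinv σ' :=
  fun _ hp => h hp

lemma pcomp_mono (hσ : σ ⊆ σ') (hτ : τ ⊆ τ') : pcomp τ σ ⊆ pcomp τ' σ' :=
  fun _ ⟨j, h₁, h₂⟩ => ⟨j, hσ h₁, hτ h₂⟩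

lemma pdom_mono (h : σ ⊆ σ') : pdom σ ⊆ pdom σ' :=
  image_mono h

lemma prng_mono (h : σ ⊆ σ') : prng σ ⊆ prng σ' :=
  image_mono h

lemma pdom_pcomp (h : prng σ ⊆ pdom τ) : pdom (pcomp τ σ) = pdom σ := by
  ext k
  simp only [mem_pdom, pcomp, mem_ofPred_eq]
  constructor
  · rintro ⟨_, j, hkj, _⟩
    exact ⟨j, hkj⟩
  · rintro ⟨j, hkj⟩
    obtain ⟨m, hjm⟩ := mem_pdom.mp (h (mem_prng.mpr ⟨k, hkj⟩))
    exact ⟨m, j, hkj, hjm⟩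

lemma prng_pcomp (h : pdom τ ⊆ prng σ) : prng (pcomp τ σ) = prng τ := by
  ext m
  simp only [mem_prng, pcomp, mem_ofPred_eq]
  constructor
  · rintro ⟨_, j, _, hjm⟩
    exact ⟨j, hjm⟩
  · rintro ⟨j, hjm⟩
    obtain ⟨k, hkj⟩ := mem_prng.mp (h (mem_pdom.mpr ⟨m, hjm⟩))
    exact ⟨k, j, hkj, hjm⟩

lemma pcomp_idb_left {c : Set ℕ} (h : prng σ ⊆ c) : pcomp (idb c) σ = σ := by
  ext ⟨k, m⟩
  simp only [pcomp, idb, mem_ofPred_eq]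
  exact ⟨fun ⟨_, hkj, _, hj⟩ => hj ▸ hkj, fun hkm => ⟨m, hkm, h (mem_prng.mpr ⟨k, hkm⟩), rfl⟩⟩

lemma pcomp_idb_right {c : Set ℕ} (h : pdom τ ⊆ c) : pcomp τ (idb c) = τ := by
  ext ⟨k, m⟩
  simp only [pcomp, idb, mem_ofPred_eq]
  exact ⟨fun ⟨_, ⟨_, hj⟩, hjm⟩ => hj ▸ hjm, fun hkm => ⟨k, ⟨h (mem_pdom.mpr ⟨m, hkm⟩), rfl⟩, hkm⟩⟩

lemma pinv_restr (g : Sinf) (d : Finset ℕ) : pinv (restr g d) = restr g⁻¹ (d.image g) := by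
  ext ⟨n, m⟩
  simp only [pinv, restr, mem_ofPred_eq, Finset.mem_image]
  constructor
  · rintro ⟨hm, rfl⟩
    exact ⟨⟨m, hm, rfl⟩, by simp⟩
  · rintro ⟨⟨m', hm', rfl⟩, rfl⟩
    simpa using hm'

lemma pcomp_restr (g h : Sinf) (d e : Finset ℕ) :
    pcomp (restr h e) (restr g d) = restr (h * g) (d.filter (g · ∈ e)) := by
  ext ⟨k, m⟩
  simp only [pcomp, restr, mem_ofPred_eq, Finset.mem_filter, Equiv.Perm.mul_apply]
  constructor
  · rintro ⟨_, ⟨hk, rfl⟩, hj, rfl⟩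
    exact ⟨⟨hk, hj⟩, rfl⟩
  · rintro ⟨⟨hk, hj⟩, rfl⟩
    exact ⟨g k, ⟨hk, rfl⟩, hj, rfl⟩

lemma idb_eq_restr_one (d : Finset ℕ) : idb (d : Set ℕ) = restr 1 d := by
  ext ⟨k, m⟩
  simp only [idb, restr, mem_ofPred_eq, Finset.mem_coe, Equiv.Perm.one_apply]
  tauto

end PartialMaps

section FinitePartialBijections

variable {G : Subgroup Sinf} {σ τ : Set (ℕ × ℕ)}

lemma pinv_mem_SGfin (h : σ ∈ SGfin G) : pinv σ ∈ SGfin G := by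
  obtain ⟨g, hg, d, rfl⟩ := h
  exact ⟨g⁻¹, inv_mem hg, d.image g, pinv_restr g d⟩

lemma pcomp_mem_SGfin (hσ : σ ∈ SGfin G) (hτ : τ ∈ SGfin G) : pcomp τ σ ∈ SGfin G := by
  obtain ⟨g, hg, d, rfl⟩ := hσ
  obtain ⟨h, hh, e, rfl⟩ := hτ
  exact ⟨h * g, mul_mem hh hg, _, pcomp_restr g h d e⟩

lemma idb_mem_SGfin (d : Finset ℕ) : idb (d : Set ℕ) ∈ SGfin G :=
  ⟨1, one_mem G, d, idb_eq_restr_one d⟩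

lemma exists_finset_prng_eq (h : σ ∈ SGfin G) : ∃ a : Finset ℕ, prng σ = a := by
  obtain ⟨g, -, d, rfl⟩ := h
  refine ⟨d.image g, ?_⟩
  ext m
  simp only [mem_prng, restr, mem_ofPred_eq, Finset.coe_image, mem_image, Finset.mem_coe]

lemma pcomp_pinv_self (h : σ ∈ SGfin G) : pcomp σ (pinv σ) = idb (prng σ) := by
  obtain ⟨g, -, d, rfl⟩ := h
  ext ⟨m, m'⟩
  simp only [pcomp, pinv, idb, restr, mem_prng, mem_ofPred_eq]
  constructor
  · rintro ⟨j, ⟨hj, rfl⟩, -, rfl⟩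
    exact ⟨⟨j, hj, rfl⟩, rfl⟩
  · rintro ⟨⟨j, hj, rfl⟩, rfl⟩
    exact ⟨j, ⟨hj, rfl⟩, hj, rfl⟩

lemma Vb_nonempty (h : σ ∈ SGfin G) : (Vb G σ).Nonempty := by
  obtain ⟨g, hg, d, rfl⟩ := h
  exact ⟨⟨g, hg⟩, fun _ hp => hp.2⟩

lemma Vc_eq_Vb_idb (c : Set ℕ) : Vc G c = Vb G (idb c) := by
  ext g
  simp [Vc, Vb, idb]

lemma Vb_mul_Vb (hσ : (Vb G σ).Nonempty) (h : pdom τ ⊆ prng σ) :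
    Vb G τ * Vb G σ = Vb G (pcomp τ σ) := by
  obtain ⟨s, hs⟩ := hσ
  ext g
  simp only [Set.mem_mul]
  constructor
  · rintro ⟨t, ht, u, hu, rfl⟩ ⟨k, m⟩ ⟨j, hkj, hjm⟩
    show (t : Sinf) ((u : Sinf) k) = m
    rw [hu _ hkj, ht _ hjm]
  · intro hg
    refine ⟨g * s⁻¹, fun ⟨j, m⟩ hjm => ?_, s, hs, inv_mul_cancel_right g s⟩
    obtain ⟨k, hkj⟩ := mem_prng.mp (h (mem_pdom.mpr ⟨m, hjm⟩))
    have hsk : (s : Sinf) k = j := hs _ hkj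
    show (g : Sinf) ((s : Sinf)⁻¹ j) = m
    rw [← hsk, Equiv.Perm.inv_eq_iff_eq.mpr rfl]
    exact hg (k, m) ⟨j, hkj, hjm⟩

lemma Vb_mul_Vc {c : Set ℕ} (h : pdom τ ⊆ c) : Vb G τ * Vc G c = Vb G τ := by
  rw [Vc_eq_Vb_idb, Vb_mul_Vb ⟨1, fun p hp => hp.2.symm⟩ (by rwa [prng_idb]),
    pcomp_idb_right h]

end FinitePartialBijections

section OrbitClosures

open TopologicalSpace

lemma closure_eq_closure_iff_of_isTopologicalBasis {Y : Type*} [TopologicalSpace Y]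
    {B : Set (Set Y)} (hB : IsTopologicalBasis B) {s t : Set Y} :
    closure s = closure t ↔ ∀ o ∈ B, ((s ∩ o).Nonempty ↔ (t ∩ o).Nonempty) := by
  have closure_subset {s t : Set Y} (hst : ∀ o ∈ B, (s ∩ o).Nonempty → (t ∩ o).Nonempty) :
      closure s ⊆ closure t := fun a ha =>
    hB.mem_closure_iff.mpr fun o ho hao => inter_comm t o ▸
      hst o ho (inter_comm o s ▸ hB.mem_closure_iff.mp ha o ho hao)
  refine ⟨fun h o ho => ?_, fun h => (closure_subset fun o ho => (h o ho).mp).antisymm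
    (closure_subset fun o ho => (h o ho).mpr)⟩
  rw [← closure_inter_open_nonempty_iff (hB.isOpen ho), h,
    closure_inter_open_nonempty_iff (hB.isOpen ho)]

lemma closure_set_smul_closure {M Y : Type*} [TopologicalSpace Y] [SMul M Y]
    [ContinuousConstSMul M Y] (s : Set M) (t : Set Y) :
    closure (s • closure t) = closure (s • t) :=
  (closure_minimal (set_smul_closure_subset s t) isClosed_closure).antisymm
    (closure_mono (smul_subset_smul_left subset_closure))

variable {G : Subgroup Sinf} {X : Type*} [MulAction G X]

lemma setOrb_mul (S T : Set G) (x : X) : setOrb G (S * T) x = S • setOrb G T x := by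
  simp only [setOrb, ← smul_singleton, mul_smul]

lemma mem_setSmul_Vc_iff {c : Set ℕ} {B : Set X} {y : X} :
    y ∈ setSmul G (Vc G c) B ↔ (setOrb G (Vc G c) y ∩ B).Nonempty := by
  have inv_mem {g : G} (hg : g ∈ Vc G c) : g⁻¹ ∈ Vc G c := fun k hk =>
    Equiv.Perm.inv_eq_iff_eq.mpr (hg k hk).symm
  simp only [setSmul, setOrb, mem_iUnion, mem_smul_set_iff_inv_smul_mem, exists_prop,
    image_inter_nonempty_iff]
  exact ⟨fun ⟨g, hg, hgy⟩ => ⟨g⁻¹, inv_mem hg, hgy⟩,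
    fun ⟨g, hg, hgy⟩ => ⟨g⁻¹, inv_mem hg, by rwa [inv_inv]⟩⟩

variable [TopologicalSpace X] {A : ℕ → Set X}

lemma mem_BsetOne_iff (hbasis : IsTopologicalBasis (range A)) {σ : Set (ℕ × ℕ)} {x y : X} :
    y ∈ BsetOne G A σ x ↔
      closure (setOrb G (Vb G σ) x) = closure (setOrb G (Vc G (prng σ)) y) := by
  simp only [BsetOne, mem_inter_iff, mem_iInter, mem_compl_iff, ← not_nonempty_iff_eq_empty,
    mem_setSmul_Vc_iff, closure_eq_closure_iff_of_isTopologicalBasis hbasis, forall_mem_range,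
    ← forall_and]
  exact forall_congr' fun l => by tauto

variable [ContinuousConstSMul G X]

lemma closure_setOrb_mul_congr (S : Set G) {T T' : Set G} {x y : X}
    (h : closure (setOrb G T x) = closure (setOrb G T' y)) :
    closure (setOrb G (S * T) x) = closure (setOrb G (S * T') y) := by
  rw [setOrb_mul, setOrb_mul, ← closure_set_smul_closure, h, closure_set_smul_closure]

lemma BsetOne_symm (hbasis : IsTopologicalBasis (range A)) {σ : Set (ℕ × ℕ)}
    (hσ : σ ∈ SGfin G) {x y : X} (hy : y ∈ BsetOne G A σ x) :
    x ∈ BsetOne G A (pinv σ) y := by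
  rw [mem_BsetOne_iff hbasis] at hy ⊢
  have hinv : pcomp (pinv σ) σ = idb (pdom σ) := by
    simpa only [pinv_pinv, prng_pinv] using pcomp_pinv_self (pinv_mem_SGfin hσ)
  calc closure (setOrb G (Vb G (pinv σ)) y)
      = closure (setOrb G (Vb G (pinv σ) * Vc G (prng σ)) y) := by
        rw [Vb_mul_Vc pdom_pinv.subset]
    _ = closure (setOrb G (Vb G (pinv σ) * Vb G σ) x) := closure_setOrb_mul_congr _ hy.symm
    _ = closure (setOrb G (Vc G (prng (pinv σ))) x) := by
        rw [Vb_mul_Vb (Vb_nonempty hσ) pdom_pinv.subset, hinv, prng_pinv, Vc_eq_Vb_idb]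

lemma BsetOne_trans (hbasis : IsTopologicalBasis (range A)) {σ τ : Set (ℕ × ℕ)}
    (hσ : (Vb G σ).Nonempty) (hdr : pdom τ ⊆ prng σ) {x y z : X}
    (h₁ : y ∈ BsetOne G A σ x) (h₂ : z ∈ BsetOne G A τ y) :
    z ∈ BsetOne G A (pcomp τ σ) x := by
  rw [mem_BsetOne_iff hbasis] at h₁ h₂ ⊢
  rw [prng_pcomp hdr, ← Vb_mul_Vb hσ hdr, closure_setOrb_mul_congr _ h₁, Vb_mul_Vc hdr, h₂]

end OrbitClosures

section AlphaSets

variable {G : Subgroup Sinf} {X : Type*} {A : ℕ → Set X}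

lemma mem_BsetSucc {prev : Set (ℕ × ℕ) → X → Set X} {σ : Set (ℕ × ℕ)} {x y : X} :
    y ∈ BsetSucc G prev σ x ↔
      (∀ b : Finset ℕ, pdom σ ⊆ b → ∃ σ' ∈ SGfin G, σ ⊆ σ' ∧ pdom σ' = b ∧ y ∈ prev σ' x) ∧
      (∀ a : Finset ℕ, prng σ ⊆ a → ∃ σ' ∈ SGfin G, σ ⊆ σ' ∧ prng σ' = a ∧ y ∈ prev σ' x) := by
  simp only [BsetSucc, mem_inter_iff, mem_iInter, mem_iUnion, exists_prop]

lemma BsetSucc_symm {prev : Set (ℕ × ℕ) → X → Set X}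
    (hprev : ∀ σ ∈ SGfin G, ∀ x y, y ∈ prev σ x → x ∈ prev (pinv σ) y)
    {σ : Set (ℕ × ℕ)} {x y : X} (hy : y ∈ BsetSucc G prev σ x) :
    x ∈ BsetSucc G prev (pinv σ) y := by
  rw [mem_BsetSucc] at hy ⊢
  obtain ⟨hdom, hrng⟩ := hy
  refine ⟨fun b hb => ?_, fun a ha => ?_⟩
  · obtain ⟨σ', hσ', hsub, hrng', hy'⟩ := hrng b (by rwa [← pdom_pinv])
    exact ⟨pinv σ', pinv_mem_SGfin hσ', pinv_mono hsub, by rwa [pdom_pinv],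
      hprev σ' hσ' x y hy'⟩
  · obtain ⟨σ', hσ', hsub, hdom', hy'⟩ := hdom a (by rwa [← prng_pinv])
    exact ⟨pinv σ', pinv_mem_SGfin hσ', pinv_mono hsub, by rwa [prng_pinv],
      hprev σ' hσ' x y hy'⟩

lemma BsetSucc_trans {prev : Set (ℕ × ℕ) → X → Set X}
    (hprev : ∀ σ ∈ SGfin G, ∀ τ ∈ SGfin G, pdom τ = prng σ →
      ∀ x y z, y ∈ prev σ x → z ∈ prev τ y → z ∈ prev (pcomp τ σ) x)
    {σ τ : Set (ℕ × ℕ)} (hdr : pdom τ = prng σ) {x y z : X}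
    (h₁ : y ∈ BsetSucc G prev σ x) (h₂ : z ∈ BsetSucc G prev τ y) :
    z ∈ BsetSucc G prev (pcomp τ σ) x := by
  rw [mem_BsetSucc] at h₁ h₂ ⊢
  rw [pdom_pcomp hdr.ge, prng_pcomp hdr.le]
  refine ⟨fun b hb => ?_, fun a ha => ?_⟩
  · obtain ⟨σ', hσ', hσσ', hdom, hy⟩ := h₁.1 b hb
    obtain ⟨a, ha⟩ := exists_finset_prng_eq hσ'
    obtain ⟨τ', hτ', hττ', hdr', hz⟩ := h₂.1 a (ha ▸ hdr ▸ prng_mono hσσ')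
    have hdr'' : pdom τ' = prng σ' := hdr'.trans ha.symm
    exact ⟨pcomp τ' σ', pcomp_mem_SGfin hσ' hτ', pcomp_mono hσσ' hττ',
      by rw [pdom_pcomp hdr''.ge, hdom], hprev σ' hσ' τ' hτ' hdr'' x y z hy hz⟩
  · obtain ⟨τ', hτ', hττ', hrng, hz⟩ := h₂.2 a ha
    obtain ⟨b, hb⟩ := exists_finset_prng_eq (pinv_mem_SGfin hτ')
    rw [prng_pinv] at hb
    obtain ⟨σ', hσ', hσσ', hdr', hy⟩ := h₁.2 b (hb ▸ hdr ▸ pdom_mono hττ')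
    have hdr'' : pdom τ' = prng σ' := hb.trans hdr'.symm
    exact ⟨pcomp τ' σ', pcomp_mem_SGfin hσ' hτ', pcomp_mono hσσ' hττ',
      by rw [prng_pcomp hdr''.le, hrng], hprev σ' hσ' τ' hτ' hdr'' x y z hy hz⟩

variable [MulAction G X]

lemma Bset_zero : Bset G A 0 = fun _ _ => univ := by
  simp [Bset]

lemma Bset_one : Bset G A 1 = BsetOne G A := by
  rw [← zero_add 1, Bset, Ordinal.limitRecOn_add_one, if_pos rfl]

lemma Bset_add_one {o : Ordinal.{0}} (h : o ≠ 0) :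
    Bset G A (o + 1) = BsetSucc G (Bset G A o) := by
  rw [Bset, Ordinal.limitRecOn_add_one, if_neg h, Bset]

lemma mem_Bset_of_isSuccLimit {o : Ordinal.{0}} (h : Order.IsSuccLimit o)
    {σ : Set (ℕ × ℕ)} {x y : X} :
    y ∈ Bset G A o σ x ↔ ∀ β < o, 1 ≤ β → y ∈ Bset G A β σ x := by
  rw [Bset, Ordinal.limitRecOn_limit _ _ _ _ h]
  simp only [mem_iInter, Bset]

variable [TopologicalSpace X] [ContinuousConstSMul G X]

lemma Bset_symm (hbasis : TopologicalSpace.IsTopologicalBasis (range A)) (α : Ordinal.{0})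
    {σ : Set (ℕ × ℕ)} (hσ : σ ∈ SGfin G) {x y : X} (hy : y ∈ Bset G A α σ x) :
    x ∈ Bset G A α (pinv σ) y := by
  induction α using Ordinal.limitRecOn generalizing σ x y with
  | zero => simp [Bset_zero]
  | add_one o ih =>
    rcases eq_or_ne o 0 with rfl | ho
    · rw [zero_add, Bset_one] at hy ⊢
      exact BsetOne_symm hbasis hσ hy
    · rw [Bset_add_one ho] at hy ⊢
      exact BsetSucc_symm (fun σ hσ x y => ih hσ) hy
  | limit o ho ih =>
    rw [mem_Bset_of_isSuccLimit ho] at hy ⊢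
    exact fun β hβ hβ₁ => ih β hβ hσ (hy β hβ hβ₁)

lemma Bset_trans (hbasis : TopologicalSpace.IsTopologicalBasis (range A)) (α : Ordinal.{0})
    {σ τ : Set (ℕ × ℕ)} (hσ : σ ∈ SGfin G) (hτ : τ ∈ SGfin G) (hdr : pdom τ = prng σ)
    {x y z : X} (h₁ : y ∈ Bset G A α σ x) (h₂ : z ∈ Bset G A α τ y) :
    z ∈ Bset G A α (pcomp τ σ) x := by
  induction α using Ordinal.limitRecOn generalizing σ τ x y z with
  | zero => simp [Bset_zero]
  | add_one o ih =>
    rcases eq_or_ne o 0 with rfl | ho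
    · rw [zero_add, Bset_one] at h₁ h₂ ⊢
      exact BsetOne_trans hbasis (Vb_nonempty hσ) hdr.le h₁ h₂
    · rw [Bset_add_one ho] at h₁ h₂ ⊢
      exact BsetSucc_trans (fun σ hσ τ hτ hdr x y z => ih hσ hτ hdr) hdr h₁ h₂
  | limit o ho ih =>
    rw [mem_Bset_of_isSuccLimit ho] at h₁ h₂ ⊢
    exact fun β hβ hβ₁ => ih β hβ hσ hτ hdr (h₁ β hβ hβ₁) (h₂ β hβ hβ₁)

lemma Bset_idb_prng_eq (hbasis : TopologicalSpace.IsTopologicalBasis (range A))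
    {α : Ordinal.{0}} {σ : Set (ℕ × ℕ)} (hσ : σ ∈ SGfin G) {x y : X}
    (hy : y ∈ Bset G A α σ x) :
    Bset G A α (idb (prng σ)) y = Bset G A α σ x := by
  obtain ⟨c, hc⟩ := exists_finset_prng_eq hσ
  have hid : idb (prng σ) ∈ SGfin G := hc ▸ idb_mem_SGfin c
  refine Subset.antisymm (fun z hz => ?_) (fun z hz => ?_)
  · simpa [pcomp_idb_left subset_rfl] using
      Bset_trans hbasis α hσ hid (pdom_idb _) hy hz
  · simpa [pcomp_pinv_self hσ] using
      Bset_trans hbasis α (pinv_mem_SGfin hσ) hσ prng_pinv.symm (Bset_symm hbasis α hσ hy) hz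

end AlphaSets

theorem alphaSet_partition_general
    (G : Subgroup Sinf)
    {X : Type*} [TopologicalSpace X] [MulAction G X] [ContinuousSMul G X]
    (A : ℕ → Set X) (hbasis : TopologicalSpace.IsTopologicalBasis (Set.range A))
    (x y : X) (σ δ : Set (ℕ × ℕ)) (hσ : σ ∈ SGfin G) (hδ : δ ∈ SGfin G)
    (c : Set ℕ) (hc : prng σ = c) (hc' : prng δ = c)
    (α : Ordinal.{0}) :
    (y ∈ Bset G A α σ x → Bset G A α (idb c) y = Bset G A α σ x) ∧
    (Bset G A α σ x = Bset G A α δ y ∨ Bset G A α σ x ∩ Bset G A α δ y = ∅) := by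
  subst hc
  refine ⟨Bset_idb_prng_eq hbasis hσ, ?_⟩
  rcases eq_empty_or_nonempty (Bset G A α σ x ∩ Bset G A α δ y) with hdisj | ⟨w, hwσ, hwδ⟩
  · exact Or.inr hdisj
  · left
    rw [← Bset_idb_prng_eq hbasis hσ hwσ, ← Bset_idb_prng_eq hbasis hδ hwδ, hc']

/-- α-sets form a partition. -/
theorem alphaSet_partition
    (G : Subgroup Sinf) (hGclosed : IsClosed (G : Set Sinf))
    {X : Type*} [TopologicalSpace X] [PolishSpace X] [MulAction G X] [ContinuousSMul G X]
    (A : ℕ → Set X) (hbasis : TopologicalSpace.IsTopologicalBasis (Set.range A))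
    (hbasisInv : ∀ l, ∃ c : Finset ℕ, ∀ g ∈ Vc G (↑c : Set ℕ), g • A l = A l)
    (x y : X) (σ δ : Set (ℕ × ℕ)) (hσ : σ ∈ SGfin G) (hδ : δ ∈ SGfin G)
    (c : Set ℕ) (hc : prng σ = c) (hc' : prng δ = c)
    (α : Ordinal.{0}) (hα : 1 ≤ α) (hαc : α.card ≤ Cardinal.aleph0) :
    (y ∈ Bset G A α σ x → Bset G A α (idb c) y = Bset G A α σ x) ∧
    (Bset G A α σ x = Bset G A α δ y ∨ Bset G A α σ x ∩ Bset G A α δ y = ∅) :=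
  alphaSet_partition_general G A hbasis x y σ δ hσ hδ c hc hc' α
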